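/- arXiv:1804.00757 — 5 statements merged into one kernel-verified Lean document; each statement's English description precedes it below -/
import Mathlib

section
/- Let τ > 0 and P_max ≥ 0 be real numbers, let t0 ≤ tf, let c : [t0, tf] → ℝ be continuous with 0 ≤ c(t) ≤ P_max for all t ∈ [t0, tf], and let u : [t0, tf] → ℝ be continuous with 0 ≤ u(t) ≤ 1 for all t ∈ [t0, tf]. If x : [t0, tf] → ℝ is differentiable and satisfies x'(t) = −(1/τ)·x(t) + (1/τ)·c(t)·u(t) for all t ∈ [t0, tf], and x(t0) ∈ [0, P_max], then x(t) ∈ [0, P_max] for all t ∈ [t0, tf]. -/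
open Real Set

/- With the integrating factor `exp (a t)`, `(x t - m) * exp (a t)` has derivative
`a * (f t - m) * exp (a t) ≥ 0`, so it stays above its nonnegative value at `t₀`. -/
theorem le_of_hasDerivAt_relaxation {s : Set ℝ} (hs : Convex ℝ s) {a m t₀ : ℝ} {f x : ℝ → ℝ}
    (ha : 0 ≤ a) (hx : ∀ t ∈ s, HasDerivAt x (a * (f t - x t)) t) (hf : ∀ t ∈ s, m ≤ f t)
    (ht₀ : t₀ ∈ s) (hx₀ : m ≤ x t₀) {t : ℝ} (ht : t ∈ s) (hle : t₀ ≤ t) : m ≤ x t := by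
  have hg : ∀ t ∈ s, HasDerivAt (fun t => (x t - m) * exp (a * t))
      (a * (f t - m) * exp (a * t)) t := fun t ht =>
    (((hx t ht).sub_const m).mul ((hasDerivAt_id' t).const_mul a).exp).congr_deriv
      (by ring)
  have hmono : MonotoneOn (fun t => (x t - m) * exp (a * t)) s :=
    monotoneOn_of_hasDerivWithinAt_nonneg hs
      (fun t ht => (hg t ht).continuousAt.continuousWithinAt)
      (fun t ht => (hg t (interior_subset ht)).hasDerivWithinAt)
      (fun t ht => mul_nonneg (mul_nonneg ha (sub_nonneg.2 (hf t (interior_subset ht))))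
        (exp_pos _).le)
  have hg_nonneg : 0 ≤ (x t - m) * exp (a * t) :=
    (mul_nonneg (sub_nonneg.2 hx₀) (exp_pos _).le).trans (hmono ht₀ ht hle)
  exact sub_nonneg.1 ((mul_nonneg_iff_of_pos_right (exp_pos _)).1 hg_nonneg)

theorem mem_Icc_of_hasDerivAt_relaxation {s : Set ℝ} (hs : Convex ℝ s) {a m M t₀ : ℝ}
    {f x : ℝ → ℝ} (ha : 0 ≤ a) (hx : ∀ t ∈ s, HasDerivAt x (a * (f t - x t)) t)
    (hf : ∀ t ∈ s, f t ∈ Icc m M) (ht₀ : t₀ ∈ s) (hx₀ : x t₀ ∈ Icc m M) {t : ℝ} (ht : t ∈ s)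
    (hle : t₀ ≤ t) : x t ∈ Icc m M := by
  refine ⟨le_of_hasDerivAt_relaxation hs ha hx (fun t ht => (hf t ht).1) ht₀ hx₀.1 ht hle, ?_⟩
  have hneg : ∀ t ∈ s, HasDerivAt (fun t => -x t) (a * (-f t - -x t)) t := fun t ht =>
    (hx t ht).neg.congr_deriv (by ring)
  exact neg_le_neg_iff.1 <| le_of_hasDerivAt_relaxation hs ha hneg
    (fun t ht => neg_le_neg (hf t ht).2) ht₀ (neg_le_neg hx₀.2) ht hle

theorem stmt_0_general
    (τ Pmax t0 tf : ℝ) (hτ : 0 < τ)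
    (c u x : ℝ → ℝ)
    (hc_bnd : ∀ t ∈ Set.Icc t0 tf, c t ∈ Set.Icc 0 Pmax)
    (hu_bnd : ∀ t ∈ Set.Icc t0 tf, u t ∈ Set.Icc (0:ℝ) 1)
    (hx : ∀ t ∈ Set.Icc t0 tf,
      HasDerivAt x (-(1/τ) * x t + (1/τ) * c t * u t) t)
    (hx0 : x t0 ∈ Set.Icc 0 Pmax) :
    ∀ t ∈ Set.Icc t0 tf, x t ∈ Set.Icc 0 Pmax := by
  intro t ht
  have hcu : ∀ t ∈ Icc t0 tf, c t * u t ∈ Icc 0 Pmax := fun t ht => by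
    obtain ⟨hc₀, hc₁⟩ := hc_bnd t ht
    obtain ⟨hu₀, hu₁⟩ := hu_bnd t ht
    exact ⟨mul_nonneg hc₀ hu₀, (mul_le_of_le_one_right hc₀ hu₁).trans hc₁⟩
  have hx' : ∀ t ∈ Icc t0 tf, HasDerivAt x (1 / τ * (c t * u t - x t)) t := fun t ht =>
    (hx t ht).congr_deriv (by ring)
  exact mem_Icc_of_hasDerivAt_relaxation (convex_Icc t0 tf) (by positivity) hx' hcu
    (left_mem_Icc.2 (ht.1.trans ht.2)) hx0 ht ht.1

/-- Invariance of the interval `[0, P_max]` for the first-order lag ICE power dynamics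
`x' = -(1/τ)·x + (1/τ)·c(t)·u(t)` with `0 ≤ c(t) ≤ P_max` and `u(t) ∈ [0,1]`. -/
theorem stmt_0
    (τ Pmax t0 tf : ℝ) (hτ : 0 < τ) (hPmax : 0 ≤ Pmax) (ht : t0 ≤ tf)
    (c u x : ℝ → ℝ)
    (hc_cont : ContinuousOn c (Set.Icc t0 tf))
    (hc_bnd : ∀ t ∈ Set.Icc t0 tf, c t ∈ Set.Icc 0 Pmax)
    (hu_cont : ContinuousOn u (Set.Icc t0 tf))
    (hu_bnd : ∀ t ∈ Set.Icc t0 tf, u t ∈ Set.Icc (0:ℝ) 1)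
    (hx : ∀ t ∈ Set.Icc t0 tf,
      HasDerivAt x (-(1/τ) * x t + (1/τ) * c t * u t) t)
    (hx0 : x t0 ∈ Set.Icc 0 Pmax) :
    ∀ t ∈ Set.Icc t0 tf, x t ∈ Set.Icc 0 Pmax :=
  stmt_0_general τ Pmax t0 tf hτ c u x hc_bnd hu_bnd hx hx0
end

section
/- Let k1, k2, g, c, ε be positive real numbers and let 0 < V_min ≤ V_max. Let α : [t0, tf] → ℝ and P : [t0, tf] → ℝ be continuous, with P_min ≤ P(t) ≤ P_max for all t. Assume that for all t ∈ [t0, tf]: (i) −(k1·V_max² + k2·cos(α(t))) − g·sin(α(t)) + (c/(V_max + ε))·P_max < 0, and (ii) −(k1·V_min² + k2·cos(α(t))) − g·sin(α(t)) + (c/(V_min + ε))·P_min > 0. If V : [t0, tf] → ℝ is differentiable, satisfies V'(t) = −(k1·V(t)² + k2·cos(α(t)))·sgn(V(t)) − g·sin(α(t)) + (c/(V(t) + ε))·P(t) for all t ∈ [t0, tf], and V(t0) ∈ [V_min, V_max], then V(t) ∈ [V_min, V_max] for all t ∈ [t0, tf]. -/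
open Set

theorem mem_Icc_of_hasDerivAt_of_inward {f f' : ℝ → ℝ} {a b m M : ℝ}
    (hf : ∀ t ∈ Icc a b, HasDerivAt f (f' t) t) (ha : f a ∈ Icc m M)
    (hM : ∀ t ∈ Icc a b, f t = M → f' t < 0) (hm : ∀ t ∈ Icc a b, f t = m → 0 < f' t) :
    ∀ t ∈ Icc a b, f t ∈ Icc m M := by
  have hcont : ContinuousOn f (Icc a b) := fun t ht => (hf t ht).continuousAt.continuousWithinAt
  have hderiv : ∀ t ∈ Ico a b, HasDerivWithinAt f (f' t) (Ici t) t :=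
    fun t ht => (hf t (Ico_subset_Icc_self ht)).hasDerivWithinAt
  have hconst : ∀ t ∈ Ico a b, HasDerivWithinAt (fun _ => M) 0 (Ici t) t :=
    fun _ _ => hasDerivWithinAt_const _ _ _
  intro t ht
  refine ⟨?_, ?_⟩
  -- the lower bound is the same fencing theorem, with the constant `m` as the lower function
  · exact image_le_of_deriv_right_lt_deriv_boundary' continuousOn_const
      (fun _ _ => hasDerivWithinAt_const _ _ m) ha.1 hcont hderiv
      (fun s hs hs' => hm s (Ico_subset_Icc_self hs) hs'.symm) ht
  · exact image_le_of_deriv_right_lt_deriv_boundary' hcont hderiv ha.2 continuousOn_const hconst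
      (fun s hs => hM s (Ico_subset_Icc_self hs)) ht

/-- The right-hand side of the velocity equation at road grade `a`, velocity `v` and
net wheel power `p`. -/
noncomputable def longitudinalAccel (k1 k2 g c ε a v p : ℝ) : ℝ :=
  -(k1 * v ^ 2 + k2 * Real.cos a) * Real.sign v - g * Real.sin a + (c / (v + ε)) * p

theorem longitudinalAccel_of_pos {k1 k2 g c ε a v : ℝ} (hv : 0 < v) (p : ℝ) :
    longitudinalAccel k1 k2 g c ε a v p =
      -(k1 * v ^ 2 + k2 * Real.cos a) - g * Real.sin a + (c / (v + ε)) * p := by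
  rw [longitudinalAccel, Real.sign_of_pos hv, mul_one]

theorem longitudinalAccel_mono_power {k1 k2 g c ε a v : ℝ} (hc : 0 ≤ c) (hvε : 0 ≤ v + ε) :
    Monotone (longitudinalAccel k1 k2 g c ε a v) := fun _ _ hp => by
  unfold longitudinalAccel
  gcongr

theorem stmt_1_general
    (k1 k2 g c ε Vmin Vmax Pmin Pmax t0 tf : ℝ)
    (hc : 0 < c) (hε : 0 < ε)
    (hVmin : 0 < Vmin) (hVminmax : Vmin ≤ Vmax)
    (α P : ℝ → ℝ)
    (hP_bnd : ∀ t ∈ Set.Icc t0 tf, P t ∈ Set.Icc Pmin Pmax)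
    (hmax : ∀ t ∈ Set.Icc t0 tf,
      -(k1 * Vmax ^ 2 + k2 * Real.cos (α t)) - g * Real.sin (α t)
        + (c / (Vmax + ε)) * Pmax < 0)
    (hmin : ∀ t ∈ Set.Icc t0 tf,
      -(k1 * Vmin ^ 2 + k2 * Real.cos (α t)) - g * Real.sin (α t)
        + (c / (Vmin + ε)) * Pmin > 0)
    (V : ℝ → ℝ)
    (hV : ∀ t ∈ Set.Icc t0 tf,
      HasDerivAt V (-(k1 * V t ^ 2 + k2 * Real.cos (α t)) * Real.sign (V t)
        - g * Real.sin (α t) + (c / (V t + ε)) * P t) t)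
    (hV0 : V t0 ∈ Set.Icc Vmin Vmax) :
    ∀ t ∈ Set.Icc t0 tf, V t ∈ Set.Icc Vmin Vmax := by
  have hVmax : 0 < Vmax := hVmin.trans_le hVminmax
  refine mem_Icc_of_hasDerivAt_of_inward
    (f' := fun t => longitudinalAccel k1 k2 g c ε (α t) (V t) (P t)) hV hV0 ?_ ?_
  · intro t ht hVt
    rw [hVt]
    calc longitudinalAccel k1 k2 g c ε (α t) Vmax (P t)
        ≤ longitudinalAccel k1 k2 g c ε (α t) Vmax Pmax :=
          longitudinalAccel_mono_power hc.le (by linarith) (hP_bnd t ht).2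
      _ < 0 := by rw [longitudinalAccel_of_pos hVmax]; exact hmax t ht
  · intro t ht hVt
    rw [hVt]
    calc 0 < longitudinalAccel k1 k2 g c ε (α t) Vmin Pmin := by
          rw [longitudinalAccel_of_pos hVmin]; exact hmin t ht
      _ ≤ longitudinalAccel k1 k2 g c ε (α t) Vmin (P t) :=
          longitudinalAccel_mono_power hc.le (by linarith) (hP_bnd t ht).1

/-- Invariance of the velocity interval `[V_min, V_max]` for the power-based longitudinal
vehicle motion equation
`V' = -(k1·V² + k2·cos α(t))·sgn(V) - g·sin α(t) + (c/(V + ε))·P(t)`,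
under the stated inward-pointing boundary conditions. -/
theorem stmt_1
    (k1 k2 g c ε Vmin Vmax Pmin Pmax t0 tf : ℝ)
    (hk1 : 0 < k1) (hk2 : 0 < k2) (hg : 0 < g) (hc : 0 < c) (hε : 0 < ε)
    (hVmin : 0 < Vmin) (hVminmax : Vmin ≤ Vmax)
    (α P : ℝ → ℝ)
    (hα_cont : ContinuousOn α (Set.Icc t0 tf))
    (hP_cont : ContinuousOn P (Set.Icc t0 tf))
    (hP_bnd : ∀ t ∈ Set.Icc t0 tf, P t ∈ Set.Icc Pmin Pmax)
    (hmax : ∀ t ∈ Set.Icc t0 tf,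
      -(k1 * Vmax ^ 2 + k2 * Real.cos (α t)) - g * Real.sin (α t)
        + (c / (Vmax + ε)) * Pmax < 0)
    (hmin : ∀ t ∈ Set.Icc t0 tf,
      -(k1 * Vmin ^ 2 + k2 * Real.cos (α t)) - g * Real.sin (α t)
        + (c / (Vmin + ε)) * Pmin > 0)
    (V : ℝ → ℝ)
    (hV : ∀ t ∈ Set.Icc t0 tf,
      HasDerivAt V (-(k1 * V t ^ 2 + k2 * Real.cos (α t)) * Real.sign (V t)
        - g * Real.sin (α t) + (c / (V t + ε)) * P t) t)
    (hV0 : V t0 ∈ Set.Icc Vmin Vmax) :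
    ∀ t ∈ Set.Icc t0 tf, V t ∈ Set.Icc Vmin Vmax :=
  stmt_1_general k1 k2 g c ε Vmin Vmax Pmin Pmax t0 tf hc hε hVmin hVminmax α P hP_bnd hmax hmin V
    hV hV0
end

section
/- Let Ω ⊆ ℝ^m be a nonempty convex set, for i = 0, 1 let f_i : ℝ^m → ℝ^n be given by f_i(u) = a_i + B_i u with a_i ∈ ℝ^n and B_i : ℝ^m → ℝ^n linear, and let L_0, L_1 : Ω → ℝ be convex functions. Then the augmented velocity–cost set Q = { (y, γ) ∈ ℝ^n × ℝ : there exist v ∈ [0,1], u_0 ∈ Ω, u_1 ∈ Ω with y = (1 − v)·f_0(u_0) + v·f_1(u_1) and γ ≥ (1 − v)·L_0(u_0) + v·L_1(u_1) } is a convex subset of ℝ^n × ℝ. -/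
/-!
Call `Vᵢ = {(fᵢ u, γ) : u ∈ Ω, Lᵢ u ≤ γ}` the velocity–cost set of mode `i`. It is the image of
the epigraph of `Lᵢ` under the affine map `(u, γ) ↦ (fᵢ u, γ)`, hence convex. The set `Q` is
exactly the convex join of `V₀` and `V₁` (the union of all segments from `V₀` to `V₁`): a slack
`γ - ((1 - v) L₀ u₀ + v L₁ u₁) ≥ 0` can be added to both endpoint costs. The convex join of two
convex sets is convex.
-/

open Set

variable {E F : Type*} [AddCommGroup F] [Module ℝ F]

def velocityCostSet (s : Set E) (f : E → F) (L : E → ℝ) : Set (F × ℝ) :=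
  {p | ∃ u ∈ s, f u = p.1 ∧ L u ≤ p.2}

theorem convexJoin_velocityCostSet (s₀ s₁ : Set E) (f₀ f₁ : E → F) (L₀ L₁ : E → ℝ) :
    convexJoin ℝ (velocityCostSet s₀ f₀ L₀) (velocityCostSet s₁ f₁ L₁) =
      {p | ∃ v ∈ Icc (0 : ℝ) 1, ∃ u₀ ∈ s₀, ∃ u₁ ∈ s₁,
        p.1 = (1 - v) • f₀ u₀ + v • f₁ u₁ ∧ p.2 ≥ (1 - v) * L₀ u₀ + v * L₁ u₁} := by
  ext ⟨y, γ⟩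
  simp only [mem_convexJoin, segment_eq_image, velocityCostSet, mem_image, mem_ofPred_eq,
    Prod.exists, Prod.smul_mk, Prod.mk_add_mk, Prod.mk.injEq, smul_eq_mul]
  constructor
  · rintro ⟨_, γ₀, ⟨u₀, hu₀, rfl, hγ₀⟩, _, γ₁, ⟨u₁, hu₁, rfl, hγ₁⟩, v, hv, rfl, rfl⟩
    refine ⟨v, hv, u₀, hu₀, u₁, hu₁, rfl, ?_⟩
    have h₀ := mul_le_mul_of_nonneg_left hγ₀ (sub_nonneg.2 hv.2)
    have h₁ := mul_le_mul_of_nonneg_left hγ₁ hv.1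
    linarith
  · rintro ⟨v, hv, u₀, hu₀, u₁, hu₁, rfl, hγ⟩
    set e := γ - ((1 - v) * L₀ u₀ + v * L₁ u₁)
    exact ⟨_, L₀ u₀ + e, ⟨u₀, hu₀, rfl, by linarith⟩, _, L₁ u₁ + e, ⟨u₁, hu₁, rfl, by linarith⟩,
      v, hv, rfl, by ring⟩

variable [AddCommGroup E] [Module ℝ E]

theorem velocityCostSet_eq_image_epigraph (s : Set E) (f : E →ᵃ[ℝ] F) (L : E → ℝ) :
    velocityCostSet s f L =
      f.prodMap (AffineMap.id ℝ ℝ) '' {p : E × ℝ | p.1 ∈ s ∧ L p.1 ≤ p.2} := by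
  ext ⟨y, γ⟩
  simp only [velocityCostSet, mem_image, mem_ofPred_eq, AffineMap.prodMap_apply,
    AffineMap.id_apply, Prod.exists, Prod.mk.injEq]
  constructor
  · rintro ⟨u, hu, rfl, hL⟩
    exact ⟨u, γ, ⟨hu, hL⟩, rfl, rfl⟩
  · rintro ⟨u, γ, ⟨hu, hL⟩, rfl, rfl⟩
    exact ⟨u, hu, rfl, hL⟩

theorem ConvexOn.convex_velocityCostSet {s : Set E} {L : E → ℝ} (hL : ConvexOn ℝ s L)
    (f : E →ᵃ[ℝ] F) : Convex ℝ (velocityCostSet s f L) := by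
  rw [velocityCostSet_eq_image_epigraph]
  exact hL.convex_epigraph.affine_image _

theorem stmt_3_general (m n : ℕ)
    (Ω : Set (Fin m → ℝ))
    (a0 a1 : Fin n → ℝ) (B0 B1 : (Fin m → ℝ) →ₗ[ℝ] (Fin n → ℝ))
    (f0 f1 : (Fin m → ℝ) → (Fin n → ℝ))
    (hf0 : ∀ u, f0 u = a0 + B0 u) (hf1 : ∀ u, f1 u = a1 + B1 u)
    (L0 L1 : (Fin m → ℝ) → ℝ)
    (hL0 : ConvexOn ℝ Ω L0) (hL1 : ConvexOn ℝ Ω L1)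
    (Q : Set ((Fin n → ℝ) × ℝ))
    (hQ : Q = { p | ∃ v ∈ Set.Icc (0:ℝ) 1, ∃ u0 ∈ Ω, ∃ u1 ∈ Ω,
      p.1 = (1 - v) • f0 u0 + v • f1 u1 ∧
      p.2 ≥ (1 - v) * L0 u0 + v * L1 u1 }) :
    Convex ℝ Q := by
  obtain ⟨g0, rfl⟩ : ∃ g : (Fin m → ℝ) →ᵃ[ℝ] (Fin n → ℝ), ⇑g = f0 :=
    ⟨B0.toAffineMap + AffineMap.const ℝ _ a0, funext fun u => by simp [hf0, add_comm]⟩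
  obtain ⟨g1, rfl⟩ : ∃ g : (Fin m → ℝ) →ᵃ[ℝ] (Fin n → ℝ), ⇑g = f1 :=
    ⟨B1.toAffineMap + AffineMap.const ℝ _ a1, funext fun u => by simp [hf1, add_comm]⟩
  rw [hQ, ← convexJoin_velocityCostSet]
  exact (hL0.convex_velocityCostSet g0).convexJoin (hL1.convex_velocityCostSet g1)

/-- Convexity of the augmented velocity–cost set of the embedded system: with `Ω`
nonempty convex, mode vector fields `fᵢ(u) = aᵢ + Bᵢ u` affine in the control, and
cost integrands `L₀, L₁` convex on `Ω`, the set
`Q = { (y, γ) : ∃ v ∈ [0,1], u₀, u₁ ∈ Ω, y = (1-v)·f₀(u₀) + v·f₁(u₁),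
       γ ≥ (1-v)·L₀(u₀) + v·L₁(u₁) }` is convex. -/
theorem stmt_3 (m n : ℕ)
    (Ω : Set (Fin m → ℝ)) (hne : Ω.Nonempty) (hconv : Convex ℝ Ω)
    (a0 a1 : Fin n → ℝ) (B0 B1 : (Fin m → ℝ) →ₗ[ℝ] (Fin n → ℝ))
    (f0 f1 : (Fin m → ℝ) → (Fin n → ℝ))
    (hf0 : ∀ u, f0 u = a0 + B0 u) (hf1 : ∀ u, f1 u = a1 + B1 u)
    (L0 L1 : (Fin m → ℝ) → ℝ)
    (hL0 : ConvexOn ℝ Ω L0) (hL1 : ConvexOn ℝ Ω L1)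
    (Q : Set ((Fin n → ℝ) × ℝ))
    (hQ : Q = { p | ∃ v ∈ Set.Icc (0:ℝ) 1, ∃ u0 ∈ Ω, ∃ u1 ∈ Ω,
      p.1 = (1 - v) • f0 u0 + v • f1 u1 ∧
      p.2 ≥ (1 - v) * L0 u0 + v * L1 u1 }) :
    Convex ℝ Q :=
  stmt_3_general m n Ω a0 a1 B0 B1 f0 f1 hf0 hf1 L0 L1 hL0 hL1 Q hQ
end

section
/- For every Lebesgue-measurable function v : [a, b] → [0, 1] (a ≤ b real) and every δ > 0, there exists a function w : [a, b] → {0, 1} which is constant on each subinterval of some finite partition a = T_0 < T_1 < ... < T_k = b, such that |∫_a^t (v(s) − w(s)) ds| ≤ δ for every t ∈ [a, b]. -/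
/-!
Cut `[a, b]` into `n` cells of length `h ≤ δ / 2` and let `w` be constant on each cell, equal to
`1` exactly when the accumulated error `∫ (v - w)` at the left end of the cell is positive
(first-order sigma-delta modulation). Each cell adds `∫ v ∈ [0, h]` to the error and removes `h`
or `0` according to its sign, so the error at the grid points stays in `[-h, h]`; between two grid
points it moves by at most `h`, since `|v - w| ≤ 1`.
-/

open MeasureTheory Set

noncomputable def sigmaDeltaError (c : ℕ → ℝ) (h : ℝ) : ℕ → ℝ
  | 0 => 0
  | i + 1 => sigmaDeltaError c h i + c i - if 0 < sigmaDeltaError c h i then h else 0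

noncomputable def sigmaDeltaBit (c : ℕ → ℝ) (h : ℝ) (i : ℕ) : ℝ :=
  if 0 < sigmaDeltaError c h i then 1 else 0

section SigmaDelta

variable (c : ℕ → ℝ) (h : ℝ)

lemma sigmaDeltaBit_mem (i : ℕ) : sigmaDeltaBit c h i ∈ ({0, 1} : Set ℝ) := by
  unfold sigmaDeltaBit
  split_ifs <;> simp

lemma sigmaDeltaError_succ (i : ℕ) :
    sigmaDeltaError c h (i + 1) = sigmaDeltaError c h i + c i - h * sigmaDeltaBit c h i := by
  simp only [sigmaDeltaError, sigmaDeltaBit]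
  split_ifs <;> ring

lemma sigmaDeltaError_eq_sum (n : ℕ) :
    sigmaDeltaError c h n = ∑ i ∈ Finset.range n, (c i - h * sigmaDeltaBit c h i) := by
  induction n with
  | zero => rfl
  | succ n ih => rw [sigmaDeltaError_succ, ih, Finset.sum_range_succ]; ring

variable {c h}

lemma abs_sigmaDeltaError_le {n : ℕ} (hh : 0 ≤ h) (hc : ∀ i < n, c i ∈ Icc 0 h) :
    ∀ i ≤ n, |sigmaDeltaError c h i| ≤ h := by
  intro i hi
  induction i with
  | zero => simpa [sigmaDeltaError] using hh
  | succ i ih =>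
    obtain ⟨hc0, hch⟩ := hc i hi
    have hE := abs_le.mp (ih (by omega))
    simp only [sigmaDeltaError, abs_le]
    split_ifs <;> constructor <;> linarith

end SigmaDelta

section IntervalIntegral

variable {f : ℝ → ℝ} {a b : ℝ}

lemma intervalIntegrable_of_norm_le {C : ℝ} (hab : a ≤ b) (hf : Measurable f)
    (hC : ∀ t ∈ Icc a b, ‖f t‖ ≤ C) : IntervalIntegrable f volume a b := by
  rw [intervalIntegrable_iff_integrableOn_Icc_of_le hab]
  exact Measure.integrableOn_of_bounded measure_Icc_lt_top.ne hf.aestronglyMeasurable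
    ((ae_restrict_iff' measurableSet_Icc).2 (ae_of_all _ hC))

lemma IntervalIntegrable.mono_Icc {x y : ℝ} (hf : IntervalIntegrable f volume a b) (hxy : x ≤ y)
    (hsub : Icc x y ⊆ Icc a b) : IntervalIntegrable f volume x y :=
  hf.mono_set (by rw [uIcc_of_le hxy]; exact hsub.trans Icc_subset_uIcc)

lemma integral_mem_Icc_of_mem_Icc (hab : a ≤ b) (hf : ∀ t ∈ Icc a b, f t ∈ Icc 0 1) :
    ∫ t in a..b, f t ∈ Icc 0 (b - a) := by
  refine ⟨intervalIntegral.integral_nonneg hab fun t ht => (hf t ht).1, ?_⟩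
  have := intervalIntegral.norm_integral_le_of_norm_le_const (a := a) (b := b) (C := 1) (f := f)
    fun t ht => by
      obtain ⟨h0, h1⟩ := hf t (Ioc_subset_Icc_self (uIoc_of_le hab ▸ ht))
      exact abs_le.2 ⟨by linarith, h1⟩
  rw [one_mul, abs_of_nonneg (sub_nonneg.2 hab)] at this
  exact (le_abs_self _).trans this

end IntervalIntegral

noncomputable def gridStep (a h : ℝ) (r : ℕ → ℝ) (t : ℝ) : ℝ := r ⌊(t - a) / h⌋₊

noncomputable def cellIntegral (f : ℝ → ℝ) (a h : ℝ) (i : ℕ) : ℝ :=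
  ∫ t in (a + i * h)..(a + (i + 1) * h), f t

noncomputable def sigmaDeltaSignal (f : ℝ → ℝ) (a h : ℝ) : ℝ → ℝ :=
  gridStep a h (sigmaDeltaBit (cellIntegral f a h) h)

section Grid

variable {f : ℝ → ℝ} {a h : ℝ} {r : ℕ → ℝ}

lemma exists_lt_mem_Icc_grid (hh : 0 < h) {n : ℕ} (hn : 0 < n) {t : ℝ}
    (ht : t ∈ Icc a (a + n * h)) : ∃ m < n, t ∈ Icc (a + m * h) (a + (m + 1) * h) := by
  have hq : 0 ≤ (t - a) / h := div_nonneg (by linarith [ht.1]) hh.le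
  by_cases hm : ⌊(t - a) / h⌋₊ < n
  · refine ⟨_, hm, ?_, ?_⟩
    · have := Nat.floor_le hq
      rw [le_div_iff₀ hh] at this; linarith
    · have := Nat.lt_floor_add_one ((t - a) / h)
      rw [div_lt_iff₀ hh] at this; linarith
  · refine ⟨n - 1, by omega, ?_, ?_⟩ <;> push_cast [Nat.one_le_iff_ne_zero.mpr hn.ne']
    · have : (n : ℝ) ≤ (t - a) / h := (Nat.floor_le hq).trans' (by exact_mod_cast not_lt.mp hm)
      rw [le_div_iff₀ hh] at this; nlinarith
    · linarith [ht.2]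

lemma Icc_grid_cell_subset (hh : 0 ≤ h) {i n : ℕ} (hi : i < n) :
    Icc (a + i * h) (a + (i + 1) * h) ⊆ Icc a (a + n * h) := by
  have : (i : ℝ) + 1 ≤ n := by exact_mod_cast hi
  exact Icc_subset_Icc (le_add_of_nonneg_right (by positivity)) (by nlinarith)

lemma integral_eq_sum_grid_cells {n : ℕ}
    (hf : ∀ i < n, IntervalIntegrable f volume (a + i * h) (a + (i + 1) * h)) :
    ∫ t in a..a + n * h, f t =
      ∑ i ∈ Finset.range n, ∫ t in (a + i * h)..(a + (i + 1) * h), f t := by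
  have := intervalIntegral.sum_integral_adjacent_intervals (a := fun i : ℕ => a + i * h)
    (f := f) (μ := volume) (n := n) fun i hi => by simpa using hf i hi
  simpa using this.symm

lemma measurable_gridStep : Measurable (gridStep a h r) :=
  measurable_from_nat.comp (Nat.measurable_floor.comp ((measurable_id.sub_const a).div_const h))

lemma gridStep_eq_of_mem_Ico (hh : 0 < h) {i : ℕ} {t : ℝ}
    (ht : t ∈ Ico (a + i * h) (a + (i + 1) * h)) : gridStep a h r t = r i := by
  have hi : (i : ℝ) ≤ (t - a) / h := by rw [le_div_iff₀ hh]; linarith [ht.1]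
  have hi' : (t - a) / h < i + 1 := by rw [div_lt_iff₀ hh]; linarith [ht.2]
  rw [gridStep, (Nat.floor_eq_iff ((Nat.cast_nonneg i).trans hi)).mpr ⟨hi, hi'⟩]

lemma intervalIntegrable_gridStep_cell (hh : 0 < h) (i : ℕ) :
    IntervalIntegrable (gridStep a h r) volume (a + i * h) (a + (i + 1) * h) := by
  rw [intervalIntegrable_iff_integrableOn_Ico_of_le (by nlinarith)]
  exact (integrableOn_const (by simp) : IntegrableOn (fun _ => r i) _ _).congr_fun
    (fun t ht => (gridStep_eq_of_mem_Ico hh ht).symm) measurableSet_Ico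

lemma integral_gridStep_cell (hh : 0 < h) (i : ℕ) :
    ∫ t in (a + i * h)..(a + (i + 1) * h), gridStep a h r t = h * r i := by
  have hle : a + i * h ≤ a + (i + 1) * h := by nlinarith
  rw [intervalIntegral.integral_of_le hle, integral_Ioc_eq_integral_Ioo,
    setIntegral_congr_fun measurableSet_Ioo
      (fun t ht => gridStep_eq_of_mem_Ico (r := r) hh ⟨ht.1.le, ht.2⟩),
    setIntegral_const, Real.volume_real_Ioo_of_le hle, smul_eq_mul]
  ring_nf

lemma sigmaDeltaSignal_mem (t : ℝ) : sigmaDeltaSignal f a h t ∈ ({0, 1} : Set ℝ) :=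
  sigmaDeltaBit_mem _ _ _

lemma integral_sub_sigmaDeltaSignal (hh : 0 < h) {n : ℕ}
    (hf : ∀ i < n, IntervalIntegrable f volume (a + i * h) (a + (i + 1) * h)) :
    ∫ t in a..a + n * h, (f t - sigmaDeltaSignal f a h t) =
      sigmaDeltaError (cellIntegral f a h) h n := by
  have hw :=
    intervalIntegrable_gridStep_cell (a := a) (r := sigmaDeltaBit (cellIntegral f a h) h) hh
  rw [sigmaDeltaSignal, integral_eq_sum_grid_cells fun i hi => (hf i hi).sub (hw i),
    sigmaDeltaError_eq_sum]
  refine Finset.sum_congr rfl fun i hi => ?_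
  rw [intervalIntegral.integral_sub (hf i (Finset.mem_range.1 hi)) (hw i),
    integral_gridStep_cell hh, cellIntegral]

lemma norm_sub_sigmaDeltaSignal_le_one {x : ℝ} (hx : f x ∈ Icc 0 1) :
    ‖f x - sigmaDeltaSignal f a h x‖ ≤ 1 := by
  have hw : sigmaDeltaSignal f a h x ∈ Icc (0 : ℝ) 1 :=
    (by simp [insert_subset_iff] : ({0, 1} : Set ℝ) ⊆ Icc 0 1) (sigmaDeltaSignal_mem x)
  exact abs_sub_le_of_nonneg_of_le hx.1 hx.2 hw.1 hw.2

lemma cellIntegral_mem_Icc (hh : 0 ≤ h) {i n : ℕ} (hi : i < n)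
    (hf01 : ∀ t ∈ Icc a (a + n * h), f t ∈ Icc 0 1) : cellIntegral f a h i ∈ Icc 0 h := by
  have := integral_mem_Icc_of_mem_Icc (f := f) (by nlinarith)
    fun s hs => hf01 s (Icc_grid_cell_subset hh hi hs)
  rwa [show a + (i + 1) * h - (a + i * h) = h by ring] at this

theorem abs_integral_sub_sigmaDeltaSignal_le (hh : 0 < h) {n : ℕ} (hn : 0 < n)
    (hf : Measurable f) (hf01 : ∀ t ∈ Icc a (a + n * h), f t ∈ Icc 0 1) {t : ℝ}
    (ht : t ∈ Icc a (a + n * h)) :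
    |∫ s in a..t, (f s - sigmaDeltaSignal f a h s)| ≤ 2 * h := by
  have hfi : IntervalIntegrable f volume a (a + n * h) :=
    intervalIntegrable_of_norm_le (C := 1) (ht.1.trans ht.2) hf fun s hs =>
      abs_le.2 ⟨by linarith [(hf01 s hs).1], (hf01 s hs).2⟩
  have hfw_le : ∀ s ∈ Icc a (a + n * h), ‖f s - sigmaDeltaSignal f a h s‖ ≤ 1 :=
    fun s hs => norm_sub_sigmaDeltaSignal_le_one (hf01 s hs)
  have hfwi :
      IntervalIntegrable (fun s => f s - sigmaDeltaSignal f a h s) volume a (a + n * h) :=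
    intervalIntegrable_of_norm_le (ht.1.trans ht.2) (hf.sub measurable_gridStep) hfw_le
  obtain ⟨m, hm, hmt, htm⟩ := exists_lt_mem_Icc_grid hh hn ht
  have hgrid : |∫ s in a..a + m * h, (f s - sigmaDeltaSignal f a h s)| ≤ h := by
    rw [integral_sub_sigmaDeltaSignal hh fun i hi =>
      hfi.mono_Icc (by nlinarith) (Icc_grid_cell_subset hh.le (hi.trans hm))]
    exact abs_sigmaDeltaError_le hh.le (fun i hi => cellIntegral_mem_Icc hh.le hi hf01) m
      hm.le
  have htail : |∫ s in a + m * h..t, (f s - sigmaDeltaSignal f a h s)| ≤ h := by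
    have := intervalIntegral.norm_integral_le_of_norm_le_const fun s hs =>
      hfw_le s ⟨by nlinarith [(uIoc_of_le hmt ▸ hs).1], (uIoc_of_le hmt ▸ hs).2.trans ht.2⟩
    rw [one_mul, abs_of_nonneg (sub_nonneg.2 hmt)] at this
    linarith [(Real.norm_eq_abs _).symm.trans_le this]
  rw [← intervalIntegral.integral_add_adjacent_intervals
    (hfwi.mono_Icc (by nlinarith) (Icc_subset_Icc le_rfl (hmt.trans ht.2)))
    (hfwi.mono_Icc hmt (Icc_subset_Icc (by nlinarith) ht.2))]
  exact (abs_add_le _ _).trans (by linarith)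

end Grid

/-- Any measurable relaxed switching signal `v : [a,b] → [0,1]` can be approximated
by a bang-bang (piecewise constant, `{0,1}`-valued) switching signal `w` whose
running integral stays within `δ` of that of `v`, uniformly on `[a,b]`. -/
theorem stmt_4
    (a b : ℝ) (hab : a ≤ b)
    (v : ℝ → ℝ) (hv_meas : Measurable v)
    (hv_bnd : ∀ t ∈ Set.Icc a b, v t ∈ Set.Icc (0:ℝ) 1)
    (δ : ℝ) (hδ : 0 < δ) :
    ∃ w : ℝ → ℝ, Measurable w ∧
      (∀ t ∈ Set.Icc a b, w t ∈ ({0, 1} : Set ℝ)) ∧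
      (∃ (k : ℕ) (T : Fin (k + 1) → ℝ), StrictMono T ∧ T 0 = a ∧ T (Fin.last k) = b ∧
        ∀ i : Fin k, ∀ s ∈ Set.Ico (T i.castSucc) (T i.succ),
          ∀ s' ∈ Set.Ico (T i.castSucc) (T i.succ), w s = w s') ∧
      ∀ t ∈ Set.Icc a b, |∫ s in a..t, (v s - w s)| ≤ δ := by
  rcases hab.eq_or_lt with rfl | hab
  · refine ⟨0, measurable_const, fun _ _ => by simp,
      ⟨0, fun _ => a, fun i j hij => by omega, rfl, rfl, fun i => i.elim0⟩, fun t ht => ?_⟩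
    simp [le_antisymm ht.2 ht.1, hδ.le]
  obtain ⟨n, hn⟩ := exists_nat_gt (2 * (b - a) / δ)
  have hn0 : (0 : ℝ) < n := (by positivity : (0 : ℝ) < 2 * (b - a) / δ).trans hn
  set h := (b - a) / n
  have hh : 0 < h := by positivity
  have hb : a + n * h = b := by rw [mul_div_cancel₀ _ hn0.ne']; ring
  have h2h : 2 * h ≤ δ := calc
    2 * h = 2 * (b - a) / n := by ring
    _ ≤ δ := (div_le_iff₀ hn0).2 (by linarith [(div_lt_iff₀ hδ).1 hn])
  refine ⟨sigmaDeltaSignal v a h, measurable_gridStep, fun t _ => sigmaDeltaSignal_mem t,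
    ⟨n, fun i => a + i * h, fun i j hij => by dsimp only; gcongr; exact_mod_cast hij, by simp,
      by simp [hb], fun i s hs s' hs' => ?_⟩, fun t ht => ?_⟩
  · simp only [Fin.val_castSucc, Fin.val_succ, Nat.cast_add, Nat.cast_one] at hs hs'
    rw [sigmaDeltaSignal, gridStep_eq_of_mem_Ico hh hs, gridStep_eq_of_mem_Ico hh hs']
  · rw [← hb] at ht hv_bnd
    exact (abs_integral_sub_sigmaDeltaSignal_le hh (by exact_mod_cast hn0) hv_meas hv_bnd ht).trans
      h2h
end

section
/- Let f_0, f_1 : ℝ^n → ℝ^n be Lipschitz continuous with Lipschitz constant L and bounded in norm by M on ℝ^n, let a ≤ b, and let v, w : [a, b] → [0, 1] be measurable functions such that |∫_a^t (v(s) − w(s)) ds| ≤ δ for all t ∈ [a, b]. Let x, y : [a, b] → ℝ^n be absolutely continuous with x(a) = y(a), satisfying x'(t) = (1 − v(t))·f_0(x(t)) + v(t)·f_1(x(t)) and y'(t) = (1 − w(t))·f_0(y(t)) + w(t)·f_1(y(t)) for almost every t ∈ [a, b]. Then there exists a constant C, depending only on L, M, and b − a (for instance C = 2M·(1 + L·(b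 − a))·e^{3L(b−a)} suffices), such that ‖x(t) − y(t)‖ ≤ C·δ for all t ∈ [a, b]. -/
/-!
With `F_σ(p) = (1 - σ) f₀(p) + σ f₁(p)`,
`x(t) - y(t) = ∫ₐᵗ (F_v(x) - F_v(y)) + ∫ₐᵗ (v - w) (f₁(y) - f₀(y))`.
The first integrand is at most `L ‖x - y‖`. In the second, `f₁ ∘ y - f₀ ∘ y` is bounded by `2M`
and `2LM`-Lipschitz because `y` is `M`-Lipschitz; integrating by parts against the primitive of
`v - w`, which is bounded by `δ`, bounds it by `δ (2M + 2LM (b - a))`. Grönwall's inequality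
then gives `‖x(t) - y(t)‖ ≤ 2M (1 + L (b - a)) δ e^{L (t - a)}`.

A non-integrable function has integral `0` in Mathlib, so the integral equations do not by
themselves say that their integrands are integrable. They are: the integrands are bounded, and
measurable because `x - x(a)` is a primitive, and every primitive is a.e.-measurable.
-/

open Set MeasureTheory intervalIntegral Real
open scoped NNReal Interval

section Primitive

variable {E : Type*} [NormedAddCommGroup E] [NormedSpace ℝ E]

theorem aestronglyMeasurable_primitive (G : ℝ → E) (a b : ℝ) :
    AEStronglyMeasurable (fun t => ∫ s in a..t, G s) (volume.restrict (Icc a b)) := by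
  rcases lt_or_ge b a with hba | hab
  · simp [Icc_eq_empty_of_lt hba]
  -- `G` is integrable on `(a, t]` exactly for `t` in an initial segment `[a, c)` or `[a, c]`;
  -- the primitive is continuous there and vanishes (by convention) beyond `c`.
  set T := {t | t ≤ b ∧ IntegrableOn G (Ioc a t)}
  have hTne : T.Nonempty := ⟨a, hab, by simp⟩
  have hTbdd : BddAbove T := ⟨b, fun t ht => ht.1⟩
  set c := sSup T
  have hcont : ContinuousOn (fun t => ∫ s in a..t, G s) (Ico a c) := by
    intro s hs
    obtain ⟨t, ⟨-, ht⟩, hst⟩ := exists_lt_of_lt_csSup hTne hs.2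
    have hat : a ≤ t := hs.1.trans hst.le
    have hGt : IntegrableOn G (uIcc a t) := by
      rwa [uIcc_of_le hat, integrableOn_Icc_iff_integrableOn_Ioc]
    have hcont_t := continuousOn_primitive_interval hGt
    rw [uIcc_of_le hat] at hcont_t
    refine (hcont_t s ⟨hs.1, hst.le⟩).mono_of_mem_nhdsWithin ?_
    exact mem_nhdsWithin.mpr ⟨Iio t, isOpen_Iio, hst, fun r hr => ⟨hr.2.1, hr.1.le⟩⟩
  have hzero : ∀ t ∈ Ioc c b, ∫ s in a..t, G s = 0 := by
    intro t ht
    have hat : a ≤ t := (le_csSup hTbdd ⟨hab, by simp⟩).trans ht.1.le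
    have hGt : ¬ IntegrableOn G (Ioc a t) := fun hGt => ht.1.not_ge (le_csSup hTbdd ⟨ht.2, hGt⟩)
    rw [integral_of_le hat, integral_undef hGt]
  have hIcc : AEStronglyMeasurable (fun t => ∫ s in a..t, G s) (volume.restrict (Icc a c)) := by
    rw [← Measure.restrict_congr_set Ico_ae_eq_Icc]
    exact hcont.aestronglyMeasurable measurableSet_Ico
  have hIoc : AEStronglyMeasurable (fun t => ∫ s in a..t, G s) (volume.restrict (Ioc c b)) :=
    aestronglyMeasurable_const.congr <|
      (ae_restrict_iff' measurableSet_Ioc).mpr (ae_of_all _ fun t ht => (hzero t ht).symm)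
  refine (aestronglyMeasurable_union_iff.mpr ⟨hIcc, hIoc⟩).mono_set fun t ht => ?_
  rcases le_or_gt t c with htc | hct
  · exact Or.inl ⟨ht.1, htc⟩
  · exact Or.inr ⟨hct, ht.2⟩

theorem aestronglyMeasurable_of_eq_add_integral {G x : ℝ → E} {a b : ℝ}
    (hx : ∀ t ∈ Icc a b, x t = x a + ∫ s in a..t, G s) :
    AEStronglyMeasurable x (volume.restrict (Icc a b)) :=
  (aestronglyMeasurable_const.add (aestronglyMeasurable_primitive G a b)).congr <|
    (ae_restrict_iff' measurableSet_Icc).mpr (ae_of_all _ fun t ht => (hx t ht).symm)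

theorem lipschitzOnWith_of_eq_add_integral {G x : ℝ → E} {a b : ℝ} {M : ℝ≥0}
    (hG : IntegrableOn G (Icc a b)) (hGM : ∀ s ∈ Icc a b, ‖G s‖ ≤ M)
    (hx : ∀ t ∈ Icc a b, x t = x a + ∫ s in a..t, G s) :
    LipschitzOnWith M x (Icc a b) := by
  refine LipschitzOnWith.of_dist_le_mul fun t ht s hs => ?_
  have ha : a ∈ Icc a b := left_mem_Icc.mpr (ht.1.trans ht.2)
  rw [dist_eq_norm, Real.dist_eq, hx t ht, hx s hs, add_sub_add_left_eq_sub,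
    integral_interval_sub_left (hG.mono_set (uIcc_subset_Icc ha ht)).intervalIntegrable
      (hG.mono_set (uIcc_subset_Icc ha hs)).intervalIntegrable]
  exact norm_integral_le_of_norm_le_const fun r hr =>
    hGM r (uIcc_subset_Icc hs ht (uIoc_subset_uIcc hr))

theorem abs_integral_mul_le_of_abs_primitive_le {u φ : ℝ → ℝ} {a t δ B : ℝ} {K : ℝ≥0}
    (hat : a ≤ t) (hu : IntervalIntegrable u volume a t)
    (hU : ∀ s ∈ Icc a t, |∫ r in a..s, u r| ≤ δ)
    (hφ : LipschitzOnWith K φ (Icc a t)) (hφt : |φ t| ≤ B) :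
    |∫ s in a..t, u s * φ s| ≤ δ * (B + K * (t - a)) := by
  set U : ℝ → ℝ := fun s => ∫ r in a..s, u r
  have hδ : 0 ≤ δ := (abs_nonneg _).trans (hU a (left_mem_Icc.mpr hat))
  have hUac : AbsolutelyContinuousOnInterval U a t :=
    hu.absolutelyContinuousOnInterval_intervalIntegral left_mem_uIcc
  have hφac : AbsolutelyContinuousOnInterval φ a t :=
    LipschitzOnWith.absolutelyContinuousOnInterval (by rwa [uIcc_of_le hat])
  have hderivU : ∫ s in a..t, deriv U s * φ s = ∫ s in a..t, u s * φ s := by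
    refine integral_congr_ae ?_
    filter_upwards [hu.ae_hasDerivAt_integral] with s hs hs'
    rw [(hs (uIoc_subset_uIcc hs') a left_mem_uIcc).deriv]
  have hparts : ∫ s in a..t, u s * φ s = U t * φ t - ∫ s in a..t, U s * deriv φ s := by
    rw [← hderivU, hUac.integral_mul_deriv_eq_deriv_mul hφac]
    simp [U]
  have hderivφ : ∀ᵐ s, s ∈ Ι a t → ‖U s * deriv φ s‖ ≤ δ * K := by
    filter_upwards [Measure.ae_ne volume t] with s hst hs
    rw [uIoc_of_le hat] at hs
    have hφ' : ‖deriv φ s‖ ≤ K :=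
      norm_deriv_le_of_lipschitzOn (Icc_mem_nhds hs.1 (lt_of_le_of_ne hs.2 hst)) hφ
    rw [norm_mul]
    exact mul_le_mul (hU s ⟨hs.1.le, hs.2⟩) hφ' (norm_nonneg _) hδ
  calc |∫ s in a..t, u s * φ s|
      ≤ |U t| * |φ t| + ‖∫ s in a..t, U s * deriv φ s‖ := by
        rw [hparts, ← abs_mul]; exact abs_sub _ _
    _ ≤ δ * B + δ * K * |t - a| := by
        gcongr
        · exact hU t (right_mem_Icc.mpr hat)
        · exact norm_integral_le_of_norm_le_const_ae hderivφ
    _ = δ * (B + K * (t - a)) := by rw [abs_of_nonneg (sub_nonneg.mpr hat)]; ring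

theorem norm_integral_smul_le_of_abs_primitive_le [CompleteSpace E] {u : ℝ → ℝ} {g : ℝ → E}
    {a t δ B : ℝ} {K : ℝ≥0} (hat : a ≤ t) (hu : IntervalIntegrable u volume a t)
    (hU : ∀ s ∈ Icc a t, |∫ r in a..s, u r| ≤ δ)
    (hg : LipschitzOnWith K g (Icc a t)) (hgt : ‖g t‖ ≤ B) :
    ‖∫ s in a..t, u s • g s‖ ≤ δ * (B + K * (t - a)) := by
  obtain ⟨ℓ, hℓ, hℓz⟩ := exists_dual_vector'' ℝ (∫ s in a..t, u s • g s)
  have hint : IntervalIntegrable (fun s => u s • g s) volume a t :=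
    hu.smul_continuousOn (by rw [uIcc_of_le hat]; exact hg.continuousOn)
  have hℓg : LipschitzOnWith K (fun s => ℓ (g s)) (Icc a t) := by
    have hℓ₁ : LipschitzWith 1 ℓ :=
      ℓ.lipschitz.weaken (by rwa [← NNReal.coe_le_coe, coe_nnnorm])
    have := hℓ₁.comp_lipschitzOnWith hg
    rwa [one_mul] at this
  have hℓgt : |ℓ (g t)| ≤ B := by
    rw [← Real.norm_eq_abs]
    exact (ℓ.le_opNorm (g t)).trans ((mul_le_of_le_one_left (norm_nonneg _) hℓ).trans hgt)
  calc ‖∫ s in a..t, u s • g s‖ = ∫ s in a..t, u s * ℓ (g s) := by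
        simp only [← smul_eq_mul, ← map_smul, ℓ.intervalIntegral_comp_comm hint]
        exact hℓz.symm
    _ ≤ |∫ s in a..t, u s * ℓ (g s)| := le_abs_self _
    _ ≤ δ * (B + K * (t - a)) := abs_integral_mul_le_of_abs_primitive_le hat hu hU hℓg hℓgt

end Primitive

theorem add_mul_gronwallBound_zero (K L x : ℝ) :
    K + L * gronwallBound 0 L K x = K * exp (L * x) := by
  rcases eq_or_ne L 0 with rfl | hL
  · simp
  · rw [gronwallBound_of_K_ne_0 hL]
    field_simp
    ring

theorem le_mul_exp_of_le_add_mul_integral {e : ℝ → ℝ} {K L a b : ℝ} (hL : 0 ≤ L)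
    (he : ContinuousOn e (Icc a b)) (h : ∀ t ∈ Icc a b, e t ≤ K + L * ∫ s in a..t, e s) :
    ∀ t ∈ Icc a b, e t ≤ K * exp (L * (t - a)) := by
  intro t ht
  have hab : a ≤ b := ht.1.trans ht.2
  -- extend `e` continuously to `ℝ` so that its primitive is differentiable everywhere
  set e' : ℝ → ℝ := fun s => e (projIcc a b hab s)
  have he' : Continuous e' :=
    he.comp_continuous (continuous_subtype_val.comp continuous_projIcc) fun s =>
      (projIcc a b hab s).2
  have he'_eq : ∀ s ∈ Icc a b, e' s = e s := fun s hs => by simp [e', projIcc_of_mem hab hs]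
  set z : ℝ → ℝ := fun τ => ∫ s in a..τ, e' s
  have hz : ∀ τ, HasDerivAt z (e' τ) τ := fun τ => (he'.integral_hasStrictDerivAt a τ).hasDerivAt
  have hz_eq : ∀ τ ∈ Icc a b, z τ = ∫ s in a..τ, e s := fun τ hτ =>
    integral_congr fun s hs => he'_eq s (uIcc_subset_Icc (left_mem_Icc.mpr hab) hτ hs)
  have hz_le : z t ≤ gronwallBound 0 L K (t - a) := by
    refine le_gronwallBound_of_liminf_deriv_right_le (f' := e')
      (fun τ _ => (hz τ).continuousAt.continuousWithinAt)
      (fun τ _ r hr => (hz τ).hasDerivWithinAt.liminf_right_slope_le hr) (by simp [z])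
      (fun τ hτ => ?_) t ht
    have hτ' : τ ∈ Icc a b := Ico_subset_Icc_self hτ
    rw [he'_eq τ hτ', hz_eq τ hτ', add_comm]
    exact h τ hτ'
  calc e t ≤ K + L * z t := by rw [hz_eq t ht]; exact h t ht
    _ ≤ K + L * gronwallBound 0 L K (t - a) := by gcongr
    _ = K * exp (L * (t - a)) := add_mul_gronwallBound_zero K L (t - a)

section Switched

variable {E : Type*} [NormedAddCommGroup E] [NormedSpace ℝ E]

def switchedField (f₀ f₁ : E → E) (σ : ℝ) (p : E) : E :=
  (1 - σ) • f₀ p + σ • f₁ p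

variable {f₀ f₁ : E → E}

theorem norm_switchedField_le {σ M : ℝ} {p : E} (hσ : σ ∈ Icc (0 : ℝ) 1)
    (h₀ : ‖f₀ p‖ ≤ M) (h₁ : ‖f₁ p‖ ≤ M) : ‖switchedField f₀ f₁ σ p‖ ≤ M :=
  mem_closedBall_zero_iff.mp <| convex_closedBall (0 : E) M (mem_closedBall_zero_iff.mpr h₀)
    (mem_closedBall_zero_iff.mpr h₁) (sub_nonneg.mpr hσ.2) hσ.1 (sub_add_cancel 1 σ)

theorem norm_switchedField_sub_le {σ L : ℝ} {p q : E} (hσ : σ ∈ Icc (0 : ℝ) 1)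
    (h₀ : ‖f₀ p - f₀ q‖ ≤ L * ‖p - q‖) (h₁ : ‖f₁ p - f₁ q‖ ≤ L * ‖p - q‖) :
    ‖switchedField f₀ f₁ σ p - switchedField f₀ f₁ σ q‖ ≤ L * ‖p - q‖ := by
  have : switchedField f₀ f₁ σ p - switchedField f₀ f₁ σ q
      = switchedField (fun r => f₀ r - f₀ q) (fun r => f₁ r - f₁ q) σ p := by
    simp only [switchedField]
    module
  exact this ▸ norm_switchedField_le hσ h₀ h₁

theorem switchedField_sub_switchedField (σ τ : ℝ) (p q : E) :
    switchedField f₀ f₁ σ p - switchedField f₀ f₁ τ q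
      = (switchedField f₀ f₁ σ p - switchedField f₀ f₁ σ q) + (σ - τ) • (f₁ q - f₀ q) := by
  simp only [switchedField]
  module

def IsSwitchedTrajectory (f₀ f₁ : E → E) (σ : ℝ → ℝ) (a b : ℝ) (x : ℝ → E) : Prop :=
  ∀ t ∈ Icc a b, x t = x a + ∫ s in a..t, switchedField f₀ f₁ (σ s) (x s)

namespace IsSwitchedTrajectory

variable {σ : ℝ → ℝ} {a b : ℝ} {x : ℝ → E} {M : ℝ≥0}

theorem integrableOn (hx : IsSwitchedTrajectory f₀ f₁ σ a b x) (hf₀ : Continuous f₀)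
    (hf₁ : Continuous f₁) (h₀ : ∀ p, ‖f₀ p‖ ≤ M) (h₁ : ∀ p, ‖f₁ p‖ ≤ M) (hσ : Measurable σ)
    (hσ01 : ∀ s ∈ Icc a b, σ s ∈ Icc (0 : ℝ) 1) :
    IntegrableOn (fun s => switchedField f₀ f₁ (σ s) (x s)) (Icc a b) := by
  have hxm := aestronglyMeasurable_of_eq_add_integral hx
  refine IntegrableOn.of_bound measure_Icc_lt_top ?_ M <|
    (ae_restrict_iff' measurableSet_Icc).mpr <| ae_of_all _ fun s hs =>
      norm_switchedField_le (hσ01 s hs) (h₀ _) (h₁ _)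
  exact ((measurable_const.sub hσ).aestronglyMeasurable.smul
    (hf₀.comp_aestronglyMeasurable hxm)).add
      (hσ.aestronglyMeasurable.smul (hf₁.comp_aestronglyMeasurable hxm))

theorem lipschitzOnWith (hx : IsSwitchedTrajectory f₀ f₁ σ a b x) (hf₀ : Continuous f₀)
    (hf₁ : Continuous f₁) (h₀ : ∀ p, ‖f₀ p‖ ≤ M) (h₁ : ∀ p, ‖f₁ p‖ ≤ M) (hσ : Measurable σ)
    (hσ01 : ∀ s ∈ Icc a b, σ s ∈ Icc (0 : ℝ) 1) :
    LipschitzOnWith M x (Icc a b) :=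
  lipschitzOnWith_of_eq_add_integral (hx.integrableOn hf₀ hf₁ h₀ h₁ hσ hσ01)
    (fun s hs => norm_switchedField_le (hσ01 s hs) (h₀ _) (h₁ _)) hx

end IsSwitchedTrajectory

end Switched

section Comparison

variable {E : Type*} [NormedAddCommGroup E] [NormedSpace ℝ E] [CompleteSpace E]
  {f₀ f₁ : E → E} {L M : ℝ≥0} {a b t δ : ℝ}

theorem norm_integral_smul_sub_comp_le {u : ℝ → ℝ} {y : ℝ → E}
    (hf₀ : LipschitzWith L f₀) (hf₁ : LipschitzWith L f₁)
    (h₀ : ∀ p, ‖f₀ p‖ ≤ M) (h₁ : ∀ p, ‖f₁ p‖ ≤ M) (hy : LipschitzOnWith M y (Icc a b))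
    (ht : t ∈ Icc a b) (hu : IntervalIntegrable u volume a t)
    (hU : ∀ s ∈ Icc a t, |∫ r in a..s, u r| ≤ δ) :
    ‖∫ s in a..t, u s • (f₁ (y s) - f₀ (y s))‖ ≤ 2 * M * (1 + L * (b - a)) * δ := by
  have hg : LipschitzOnWith (L * M + L * M) (fun s => f₁ (y s) - f₀ (y s)) (Icc a t) :=
    ((hf₁.comp_lipschitzOnWith hy).sub (hf₀.comp_lipschitzOnWith hy)).mono
      (Icc_subset_Icc_right ht.2)
  have hgt : ‖f₁ (y t) - f₀ (y t)‖ ≤ 2 * M :=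
    (norm_sub_le _ _).trans (by linarith [h₀ (y t), h₁ (y t)])
  have hδ : 0 ≤ δ := (abs_nonneg _).trans (hU a (left_mem_Icc.mpr ht.1))
  have hLM : (L : ℝ) * M * (t - a) ≤ L * M * (b - a) := by gcongr; exact ht.2
  calc ‖∫ s in a..t, u s • (f₁ (y s) - f₀ (y s))‖
      ≤ δ * (2 * M + (L * M + L * M : ℝ≥0) * (t - a)) :=
        norm_integral_smul_le_of_abs_primitive_le ht.1 hu hU hg hgt
    _ ≤ 2 * M * (1 + L * (b - a)) * δ := by push_cast; nlinarith

theorem IsSwitchedTrajectory.norm_sub_le_add_integral {v w : ℝ → ℝ} {x y : ℝ → E}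
    (hf₀ : LipschitzWith L f₀) (hf₁ : LipschitzWith L f₁)
    (h₀ : ∀ p, ‖f₀ p‖ ≤ M) (h₁ : ∀ p, ‖f₁ p‖ ≤ M) (hv : Measurable v) (hw : Measurable w)
    (hv01 : ∀ s ∈ Icc a b, v s ∈ Icc (0 : ℝ) 1) (hw01 : ∀ s ∈ Icc a b, w s ∈ Icc (0 : ℝ) 1)
    (hδ : ∀ t ∈ Icc a b, |∫ s in a..t, (v s - w s)| ≤ δ)
    (hx : IsSwitchedTrajectory f₀ f₁ v a b x) (hy : IsSwitchedTrajectory f₀ f₁ w a b y)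
    (hxy : x a = y a) (ht : t ∈ Icc a b) :
    ‖x t - y t‖ ≤ 2 * M * (1 + L * (b - a)) * δ + L * ∫ s in a..t, ‖x s - y s‖ := by
  have hsub : Icc a t ⊆ Icc a b := Icc_subset_Icc_right ht.2
  have hsub' : uIcc a t ⊆ Icc a b := uIcc_of_le ht.1 ▸ hsub
  have hGx := ((hx.integrableOn hf₀.continuous hf₁.continuous h₀ h₁ hv hv01).mono_set
    hsub').intervalIntegrable
  have hGy := ((hy.integrableOn hf₀.continuous hf₁.continuous h₀ h₁ hw hw01).mono_set
    hsub').intervalIntegrable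
  have hx_lip := hx.lipschitzOnWith hf₀.continuous hf₁.continuous h₀ h₁ hv hv01
  have hy_lip := hy.lipschitzOnWith hf₀.continuous hf₁.continuous h₀ h₁ hw hw01
  have hu : IntervalIntegrable (fun s => v s - w s) volume a t := by
    refine (intervalIntegrable_iff_integrableOn_Icc_of_le ht.1).mpr <| IntegrableOn.of_bound
      measure_Icc_lt_top (hv.sub hw).aestronglyMeasurable 1 <|
      (ae_restrict_iff' measurableSet_Icc).mpr <| ae_of_all _ fun s hs => ?_
    obtain ⟨hv0, hv1⟩ := hv01 s (hsub hs)
    obtain ⟨hw0, hw1⟩ := hw01 s (hsub hs)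
    exact abs_sub_le_of_nonneg_of_le hv0 hv1 hw0 hw1
  have hug : IntervalIntegrable (fun s => (v s - w s) • (f₁ (y s) - f₀ (y s))) volume a t :=
    hu.smul_continuousOn (((hf₁.continuous.comp_continuousOn hy_lip.continuousOn).sub
      (hf₀.continuous.comp_continuousOn hy_lip.continuousOn)).mono hsub')
  have he : IntervalIntegrable (fun s => L * ‖x s - y s‖) volume a t :=
    (continuousOn_const.mul ((hx_lip.continuousOn.sub hy_lip.continuousOn).norm)).mono hsub'
      |>.intervalIntegrable
  have hsplit : x t - y t
      = (∫ s in a..t, (switchedField f₀ f₁ (v s) (x s) - switchedField f₀ f₁ (v s) (y s)))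
        + ∫ s in a..t, (v s - w s) • (f₁ (y s) - f₀ (y s)) := by
    simp only [fun s => eq_sub_of_add_eq
      (switchedField_sub_switchedField (f₀ := f₀) (f₁ := f₁) (v s) (w s) (x s) (y s)).symm]
    rw [integral_sub (hGx.sub hGy) hug, integral_sub hGx hGy, hx t ht, hy t ht, hxy]
    abel
  have hD : ‖∫ s in a..t, (switchedField f₀ f₁ (v s) (x s) - switchedField f₀ f₁ (v s) (y s))‖
      ≤ L * ∫ s in a..t, ‖x s - y s‖ := by
    rw [← intervalIntegral.integral_const_mul]
    refine norm_integral_le_of_norm_le ht.1 (ae_of_all _ fun s hs => ?_) he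
    exact norm_switchedField_sub_le (hv01 s (hsub (Ioc_subset_Icc_self hs)))
      (hf₀.norm_sub_le _ _) (hf₁.norm_sub_le _ _)
  rw [hsplit, add_comm (2 * M * _ * δ)]
  exact (norm_add_le _ _).trans (add_le_add hD (norm_integral_smul_sub_comp_le hf₀ hf₁ h₀ h₁
    hy_lip ht hu fun s hs => hδ s (hsub hs)))

end Comparison

theorem stmt_5_general (n : ℕ)
    (f0 f1 : EuclideanSpace ℝ (Fin n) → EuclideanSpace ℝ (Fin n))
    (L M : ℝ) (hL : 0 ≤ L) (hM : 0 ≤ M)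
    (hf0_lip : ∀ p q, ‖f0 p - f0 q‖ ≤ L * ‖p - q‖)
    (hf1_lip : ∀ p q, ‖f1 p - f1 q‖ ≤ L * ‖p - q‖)
    (hf0_bnd : ∀ p, ‖f0 p‖ ≤ M) (hf1_bnd : ∀ p, ‖f1 p‖ ≤ M)
    (a b : ℝ)
    (v w : ℝ → ℝ) (hv_meas : Measurable v) (hw_meas : Measurable w)
    (hv_bnd : ∀ t ∈ Set.Icc a b, v t ∈ Set.Icc (0:ℝ) 1)
    (hw_bnd : ∀ t ∈ Set.Icc a b, w t ∈ Set.Icc (0:ℝ) 1)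
    (δ : ℝ)
    (hδ : ∀ t ∈ Set.Icc a b, |∫ s in a..t, (v s - w s)| ≤ δ)
    (x y : ℝ → EuclideanSpace ℝ (Fin n))
    (hxy0 : x a = y a)
    (hx : ∀ t ∈ Set.Icc a b,
      x t = x a + ∫ s in a..t, ((1 - v s) • f0 (x s) + v s • f1 (x s)))
    (hy : ∀ t ∈ Set.Icc a b,
      y t = y a + ∫ s in a..t, ((1 - w s) • f0 (y s) + w s • f1 (y s))) :
    ∀ t ∈ Set.Icc a b,
      ‖x t - y t‖ ≤ (2 * M * (1 + L * (b - a)) * Real.exp (3 * L * (b - a))) * δ := by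
  intro t ht
  lift L to ℝ≥0 using hL
  lift M to ℝ≥0 using hM
  have hf0 : LipschitzWith L f0 :=
    LipschitzWith.of_dist_le_mul fun p q => by simpa only [dist_eq_norm] using hf0_lip p q
  have hf1 : LipschitzWith L f1 :=
    LipschitzWith.of_dist_le_mul fun p q => by simpa only [dist_eq_norm] using hf1_lip p q
  have hx_lip := IsSwitchedTrajectory.lipschitzOnWith hx hf0.continuous hf1.continuous
    hf0_bnd hf1_bnd hv_meas hv_bnd
  have hy_lip := IsSwitchedTrajectory.lipschitzOnWith hy hf0.continuous hf1.continuous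
    hf0_bnd hf1_bnd hw_meas hw_bnd
  have hgronwall := le_mul_exp_of_le_add_mul_integral L.coe_nonneg
    (hx_lip.continuousOn.sub hy_lip.continuousOn).norm
    (fun τ hτ => IsSwitchedTrajectory.norm_sub_le_add_integral hf0 hf1 hf0_bnd hf1_bnd
      hv_meas hw_meas hv_bnd hw_bnd hδ hx hy hxy0 hτ) t ht
  have hδ0 : 0 ≤ δ := (abs_nonneg _).trans (hδ a ⟨le_rfl, ht.1.trans ht.2⟩)
  have hba : 0 ≤ b - a := sub_nonneg.mpr (ht.1.trans ht.2)
  calc ‖x t - y t‖ ≤ 2 * M * (1 + L * (b - a)) * δ * exp (L * (t - a)) := hgronwall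
    _ ≤ 2 * M * (1 + L * (b - a)) * δ * exp (3 * L * (b - a)) := by
        gcongr _ * exp ?_
        nlinarith [mul_le_mul_of_nonneg_left (sub_le_sub_right ht.2 a) L.coe_nonneg,
          mul_nonneg L.coe_nonneg hba]
    _ = _ := by ring

/-- Grönwall-type estimate: if the running integrals of two switching signals
`v, w : [a,b] → [0,1]` differ by at most `δ`, then the corresponding trajectories
of `ẋ = (1-v)·f₀(x) + v·f₁(x)` and `ẏ = (1-w)·f₀(y) + w·f₁(y)` from the same
initial state (written in integral form, i.e., as absolutely continuous solutions)
stay within `C·δ` of each other, with `C = 2M(1+L(b-a))·e^{3L(b-a)}`. -/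
theorem stmt_5 (n : ℕ)
    (f0 f1 : EuclideanSpace ℝ (Fin n) → EuclideanSpace ℝ (Fin n))
    (L M : ℝ) (hL : 0 ≤ L) (hM : 0 ≤ M)
    (hf0_lip : ∀ p q, ‖f0 p - f0 q‖ ≤ L * ‖p - q‖)
    (hf1_lip : ∀ p q, ‖f1 p - f1 q‖ ≤ L * ‖p - q‖)
    (hf0_bnd : ∀ p, ‖f0 p‖ ≤ M) (hf1_bnd : ∀ p, ‖f1 p‖ ≤ M)
    (a b : ℝ) (hab : a ≤ b)
    (v w : ℝ → ℝ) (hv_meas : Measurable v) (hw_meas : Measurable w)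
    (hv_bnd : ∀ t ∈ Set.Icc a b, v t ∈ Set.Icc (0:ℝ) 1)
    (hw_bnd : ∀ t ∈ Set.Icc a b, w t ∈ Set.Icc (0:ℝ) 1)
    (δ : ℝ)
    (hδ : ∀ t ∈ Set.Icc a b, |∫ s in a..t, (v s - w s)| ≤ δ)
    (x y : ℝ → EuclideanSpace ℝ (Fin n))
    (hxy0 : x a = y a)
    (hx : ∀ t ∈ Set.Icc a b,
      x t = x a + ∫ s in a..t, ((1 - v s) • f0 (x s) + v s • f1 (x s)))
    (hy : ∀ t ∈ Set.Icc a b,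
      y t = y a + ∫ s in a..t, ((1 - w s) • f0 (y s) + w s • f1 (y s))) :
    ∀ t ∈ Set.Icc a b,
      ‖x t - y t‖ ≤ (2 * M * (1 + L * (b - a)) * Real.exp (3 * L * (b - a))) * δ :=
  stmt_5_general n f0 f1 L M hL hM hf0_lip hf1_lip hf0_bnd hf1_bnd a b v w hv_meas hw_meas hv_bnd
    hw_bnd δ hδ x y hxy0 hx hy
end
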